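/- arXiv:2212.06114 — 4 statements merged into one kernel-verified Lean document; each statement's English description precedes it below -/
import Mathlib

section
/- Consider the ODE system u' = r₁m² − γ₀u, u_p' = γ₀u − τ_p u_p, m' = τ_S I/(1+Cuⁿ) − dm − r₂um − r₁m², M' = α₁u(M̂−M)M/(1+α₂u) − σM + λ_M, I' = τ₁uM/(1+τ₂u) − τ₃I, with all parameters positive and n ≥ 1. For any non-negative initial condition (u(0), u_p(0), m(0), M(0), I(0)), any solution remains non-negative in all components for all t ≥ 0 in its interval of existence. -/
/-!
Each component obeys `f' ≥ K f` wherever `f ≤ 0`, once the components it depends on are known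
to be non-negative, so non-negativity propagates in the order `u, u_p, M, I, m`. The constant `K`
is a bound for the coefficient of `f` in its own equation; for `M` and `m` it comes from a lower
bound of the continuous solution on the compact interval `[0, T]`. A comparison with the barriers
`ε e^{(K+1)t}` then shows that such an `f` cannot become negative.
-/

open Set Real

theorem nonneg_of_mul_le_deriv_of_nonpos {f f' : ℝ → ℝ} {a b K : ℝ}
    (hf : ∀ t ∈ Icc a b, HasDerivAt f (f' t) t) (ha : 0 ≤ f a)
    (hK : ∀ t ∈ Icc a b, f t ≤ 0 → K * f t ≤ f' t) :
    ∀ t ∈ Icc a b, 0 ≤ f t := by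
  have barrier : ∀ ε > 0, ∀ t ∈ Icc a b, -f t ≤ ε * exp ((K + 1) * t) := by
    intro ε hε
    refine image_le_of_deriv_right_lt_deriv_boundary (f := fun t => -f t) (f' := fun t => -f' t)
      (B' := fun t => (K + 1) * (ε * exp ((K + 1) * t)))
      (fun t ht => (hf t ht).continuousAt.neg.continuousWithinAt)
      (fun t ht => (hf t (Ico_subset_Icc_self ht)).neg.hasDerivWithinAt)
      (by have := exp_pos ((K + 1) * a); nlinarith) (fun t => ?_) fun t ht hft => ?_
    · simpa [mul_comm, mul_left_comm] using ((hasDerivAt_mul_const (K + 1)).exp).const_mul ε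
    · -- where `-f` touches the barrier it is positive, so it grows at rate `≤ K (-f) < (K+1) (-f)`
      have hpos : 0 < -f t := hft ▸ by positivity
      have := hK t (Ico_subset_Icc_self ht) (by linarith)
      rw [← hft]
      linarith
  intro t ht
  refine neg_nonpos.mp (le_of_forall_pos_le_add fun ε hε => ?_)
  have := barrier (ε / exp ((K + 1) * t)) (by positivity) t ht
  rw [div_mul_cancel₀ _ (exp_pos _).ne'] at this
  linarith

theorem mul_div_one_add_mul_le_div {a b x : ℝ} (ha : 0 ≤ a) (hb : 0 < b) (hx : 0 ≤ x) :
    a * x / (1 + b * x) ≤ a / b := by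
  rw [div_le_div_iff₀ (by positivity) hb]
  nlinarith

theorem stmt_0_general
    (r₁ r₂ γ₀ τp τS C d α₁ α₂ Mhat σ lamM τ₁ τ₂ τ₃ : ℝ) (n : ℕ)
    (hr₁ : 0 < r₁) (hr₂ : 0 < r₂) (hγ₀ : 0 < γ₀) (hτS : 0 < τS)
    (hC : 0 < C) (hα₁ : 0 < α₁) (hα₂ : 0 < α₂) (hM : 0 < Mhat)
    (hlam : 0 < lamM) (hτ₁ : 0 < τ₁) (hτ₂ : 0 < τ₂)
    (T : ℝ) (u up m M I : ℝ → ℝ)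
    (hu : ∀ t ∈ Icc (0:ℝ) T, HasDerivAt u (r₁ * (m t)^2 - γ₀ * u t) t)
    (hup : ∀ t ∈ Icc (0:ℝ) T, HasDerivAt up (γ₀ * u t - τp * up t) t)
    (hm : ∀ t ∈ Icc (0:ℝ) T, HasDerivAt m
      (τS * I t / (1 + C * (u t)^n) - d * m t - r₂ * u t * m t - r₁ * (m t)^2) t)
    (hM' : ∀ t ∈ Icc (0:ℝ) T, HasDerivAt M
      (α₁ * u t / (1 + α₂ * u t) * (Mhat - M t) * M t - σ * M t + lamM) t)
    (hI : ∀ t ∈ Icc (0:ℝ) T, HasDerivAt I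
      (τ₁ * u t / (1 + τ₂ * u t) * M t - τ₃ * I t) t)
    (h0 : 0 ≤ u 0 ∧ 0 ≤ up 0 ∧ 0 ≤ m 0 ∧ 0 ≤ M 0 ∧ 0 ≤ I 0) :
    ∀ t ∈ Icc (0:ℝ) T, 0 ≤ u t ∧ 0 ≤ up t ∧ 0 ≤ m t ∧ 0 ≤ M t ∧ 0 ≤ I t := by
  obtain ⟨hu0, hup0, hm0, hM0, hI0⟩ := h0
  have hu_nonneg := nonneg_of_mul_le_deriv_of_nonpos (K := -γ₀) hu hu0 fun t _ _ => by
    nlinarith [sq_nonneg (m t)]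
  have hup_nonneg := nonneg_of_mul_le_deriv_of_nonpos (K := -τp) hup hup0 fun t ht _ => by
    nlinarith [hu_nonneg t ht]
  obtain ⟨LM, hLM⟩ := isCompact_Icc.bddBelow_image (HasDerivAt.continuousOn hM')
  have hM_nonneg := nonneg_of_mul_le_deriv_of_nonpos (K := α₁ / α₂ * (Mhat - LM) - σ) hM' hM0
    fun t ht hMt => by
      have hut := hu_nonneg t ht
      have hLMt : LM ≤ M t := hLM (mem_image_of_mem M ht)
      have hrate := mul_div_one_add_mul_le_div hα₁.le hα₂ hut
      have hrate_nonneg : 0 ≤ α₁ * u t / (1 + α₂ * u t) := by positivity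
      nlinarith [mul_le_mul hrate (by linarith : Mhat - M t ≤ Mhat - LM) (by linarith) (by positivity)]
  have hI_nonneg := nonneg_of_mul_le_deriv_of_nonpos (K := -τ₃) hI hI0 fun t ht _ => by
    have hut := hu_nonneg t ht
    have hMt := hM_nonneg t ht
    nlinarith [show 0 ≤ τ₁ * u t / (1 + τ₂ * u t) * M t by positivity]
  obtain ⟨Lm, hLm⟩ := isCompact_Icc.bddBelow_image (HasDerivAt.continuousOn hm)
  have hm_nonneg := nonneg_of_mul_le_deriv_of_nonpos (K := -d - r₁ * Lm) hm hm0 fun t ht hmt => by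
    have hLmt : Lm ≤ m t := hLm (mem_image_of_mem m ht)
    have hut := hu_nonneg t ht
    have hIt := hI_nonneg t ht
    nlinarith [show 0 ≤ τS * I t / (1 + C * (u t)^n) by positivity,
      mul_nonneg (mul_nonneg hr₂.le hut) (neg_nonneg.mpr hmt),
      mul_nonneg hr₁.le (mul_nonneg (neg_nonneg.mpr hmt) (sub_nonneg.mpr hLmt))]
  exact fun t ht => ⟨hu_nonneg t ht, hup_nonneg t ht, hm_nonneg t ht, hM_nonneg t ht, hI_nonneg t ht⟩

/-- Non-negativity of solutions of the spatially homogeneous Alzheimer model. -/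
theorem stmt_0
    (r₁ r₂ γ₀ τp τS C d α₁ α₂ Mhat σ lamM τ₁ τ₂ τ₃ : ℝ) (n : ℕ)
    (hr₁ : 0 < r₁) (hr₂ : 0 < r₂) (hγ₀ : 0 < γ₀) (hτp : 0 < τp) (hτS : 0 < τS)
    (hC : 0 < C) (hd : 0 < d) (hα₁ : 0 < α₁) (hα₂ : 0 < α₂) (hM : 0 < Mhat)
    (hσ : 0 < σ) (hlam : 0 < lamM) (hτ₁ : 0 < τ₁) (hτ₂ : 0 < τ₂) (hτ₃ : 0 < τ₃)
    (hn : 1 ≤ n)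
    (T : ℝ) (u up m M I : ℝ → ℝ)
    (hu : ∀ t ∈ Icc (0:ℝ) T, HasDerivAt u (r₁ * (m t)^2 - γ₀ * u t) t)
    (hup : ∀ t ∈ Icc (0:ℝ) T, HasDerivAt up (γ₀ * u t - τp * up t) t)
    (hm : ∀ t ∈ Icc (0:ℝ) T, HasDerivAt m
      (τS * I t / (1 + C * (u t)^n) - d * m t - r₂ * u t * m t - r₁ * (m t)^2) t)
    (hM' : ∀ t ∈ Icc (0:ℝ) T, HasDerivAt M
      (α₁ * u t / (1 + α₂ * u t) * (Mhat - M t) * M t - σ * M t + lamM) t)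
    (hI : ∀ t ∈ Icc (0:ℝ) T, HasDerivAt I
      (τ₁ * u t / (1 + τ₂ * u t) * M t - τ₃ * I t) t)
    (h0 : 0 ≤ u 0 ∧ 0 ≤ up 0 ∧ 0 ≤ m 0 ∧ 0 ≤ M 0 ∧ 0 ≤ I 0) :
    ∀ t ∈ Icc (0:ℝ) T, 0 ≤ u t ∧ 0 ≤ up t ∧ 0 ≤ m t ∧ 0 ≤ M t ∧ 0 ≤ I t :=
  stmt_0_general r₁ r₂ γ₀ τp τS C d α₁ α₂ Mhat σ lamM τ₁ τ₂ τ₃ n hr₁ hr₂ hγ₀ hτS hC hα₁ hα₂ hM hlam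
    hτ₁ hτ₂ T u up m M I hu hup hm hM' hI h0
end

section
/- Assume σγ₀τ₃ < τ₁τ_Sλ_M and all parameters r₁, r₂, γ₀, σ, α₁, α₂, M̂, λ_M, τ₁, τ₂, τ₃, τ_S, C, τ_p positive, n ≥ 1. Then there exists d̃ > 0 such that for all 0 < d < d̃, the steady-state system r₁m² = γ₀u, γ₀u = τ_p u_p, τ_S I/(1+Cuⁿ) = dm + r₂um + r₁m², (α₁u/(1+α₂u))(M̂−M)M − σM + λ_M = 0, τ₁uM/(1+τ₂u) = τ₃I admits at least two solutions with all five components strictly positive. -/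
/-!
Eliminating `u = r₁ m² / γ₀`, `u_p`, the microglia level `M` (the positive root of its quadratic
balance) and `I` reduces the system to the scalar equation `P(m) + d = F(m)`. Since
`|σ M(u) - λ_M| = O(u)`, as `m → 0⁺`
`(F - P)(m) / m → F'(0) - P'(0) = r₁ (τ₁ τ_S λ_M - σ γ₀ τ₃) / (γ₀ σ τ₃) > 0`,
while `F(m) = O(1/m)` and `P(m) ≥ r₁ m` for large `m`. So `F - P` tends to `0` at `0⁺`,
to `-∞` at `∞`, and is positive at some `m₀`; every level `0 < d < (F - P)(m₀)` is then crossed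
once on each side of `m₀` by the intermediate value theorem.
-/

open Set Filter Topology

noncomputable section

def quadPosRoot (a b c : ℝ) : ℝ := (-b + √(b ^ 2 + 4 * a * c)) / (2 * a)

theorem quadPosRoot_isRoot {a b c : ℝ} (ha : a ≠ 0) (hD : 0 ≤ b ^ 2 + 4 * a * c) :
    a * quadPosRoot a b c ^ 2 + b * quadPosRoot a b c - c = 0 := by
  have hs := Real.sq_sqrt hD
  unfold quadPosRoot
  generalize √(b ^ 2 + 4 * a * c) = s at hs ⊢
  calc a * ((-b + s) / (2 * a)) ^ 2 + b * ((-b + s) / (2 * a)) - c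
      = (s ^ 2 - (b ^ 2 + 4 * a * c)) / (4 * a) := by field_simp; ring
    _ = 0 := by rw [hs, sub_self, zero_div]

theorem quadPosRoot_pos {a b c : ℝ} (ha : 0 < a) (hc : 0 < c) : 0 < quadPosRoot a b c := by
  have hb : b < √(b ^ 2 + 4 * a * c) := calc
    b ≤ |b| := le_abs_self b
    _ = √(b ^ 2) := (Real.sqrt_sq_eq_abs b).symm
    _ < √(b ^ 2 + 4 * a * c) := Real.sqrt_lt_sqrt (sq_nonneg b) (by linarith [mul_pos ha hc])
  exact div_pos (by linarith) (by linarith)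

theorem ContinuousOn.quadPosRoot {α : Type*} [TopologicalSpace α] {f g h : α → ℝ} {s : Set α}
    (hf : ContinuousOn f s) (hg : ContinuousOn g s) (hh : ContinuousOn h s)
    (hf₀ : ∀ x ∈ s, f x ≠ 0) : ContinuousOn (fun x => quadPosRoot (f x) (g x) (h x)) s :=
  (hg.neg.add ((hg.pow 2).add ((continuousOn_const.mul hf).mul hh)).sqrt).div
    (continuousOn_const.mul hf) fun x hx => mul_ne_zero two_ne_zero (hf₀ x hx)

theorem ContinuousOn.exists_two_eq_of_eventually_lt {g : ℝ → ℝ} {m₀ d : ℝ}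
    (hg : ContinuousOn g (Ioi 0)) (hm₀ : 0 < m₀) (hd : d < g m₀)
    (h₀ : ∀ᶠ m in 𝓝[>] 0, g m < d) (h_top : ∀ᶠ m in atTop, g m < d) :
    ∃ x ∈ Ioo 0 m₀, ∃ y ∈ Ioi m₀, g x = d ∧ g y = d := by
  obtain ⟨a, ha, ⟨ha₀, ham₀⟩⟩ := (h₀.and (Ioo_mem_nhdsGT hm₀)).exists
  obtain ⟨c, hc, hm₀c⟩ := (h_top.and (eventually_gt_atTop m₀)).exists
  obtain ⟨x, ⟨hax, hxm₀⟩, hx⟩ := intermediate_value_Icc ham₀.le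
    (hg.mono fun t ht => ha₀.trans_le ht.1) ⟨ha.le, hd.le⟩
  obtain ⟨y, ⟨hm₀y, -⟩, hy⟩ := intermediate_value_Icc' hm₀c.le
    (hg.mono fun t ht => hm₀.trans_le ht.1) ⟨hc.le, hd.le⟩
  refine ⟨x, ⟨ha₀.trans_le hax, hxm₀.lt_of_ne ?_⟩, y, hm₀y.lt_of_ne ?_, hx, hy⟩
  · rintro rfl; exact hd.ne' hx
  · rintro rfl; exact hd.ne' hy

structure ModelParams where
  (r₁ r₂ γ₀ σ α₁ α₂ Mhat lamM τ₁ τ₂ τ₃ τS C τp : ℝ)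
  (n : ℕ)
  (r₁_pos : 0 < r₁) (r₂_pos : 0 < r₂) (γ₀_pos : 0 < γ₀) (σ_pos : 0 < σ) (α₁_pos : 0 < α₁)
  (α₂_pos : 0 < α₂) (Mhat_pos : 0 < Mhat) (lamM_pos : 0 < lamM) (τ₁_pos : 0 < τ₁)
  (τ₂_pos : 0 < τ₂) (τ₃_pos : 0 < τ₃) (τS_pos : 0 < τS) (C_pos : 0 < C) (τp_pos : 0 < τp)
  (one_le_n : 1 ≤ n)

namespace ModelParams

variable (p : ModelParams)

def u (m : ℝ) : ℝ := p.r₁ * m ^ 2 / p.γ₀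

def activation (u : ℝ) : ℝ := p.α₁ * u / (1 + p.α₂ * u)

/-- At `u = 0` the quadratic degenerates and `M 0 = 0` is a junk value; the root it should be,
`lamM / σ`, is only reached as a limit (`tendsto_M_nhdsGT_zero`). -/
def M (u : ℝ) : ℝ := quadPosRoot (p.activation u) (p.σ - p.activation u * p.Mhat) p.lamM

def I (u : ℝ) : ℝ := p.τ₁ * u * p.M u / (p.τ₃ * (1 + p.τ₂ * u))

def F (m : ℝ) : ℝ := p.τS * p.I (p.u m) / (m * (1 + p.C * p.u m ^ p.n))

def P (m : ℝ) : ℝ := p.r₂ * (p.r₁ / p.γ₀) * m ^ 2 + p.r₁ * m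

def Mmax : ℝ := p.Mhat + p.lamM / p.σ

def state (m : ℝ) : ℝ × ℝ × ℝ × ℝ × ℝ :=
  (p.u m, p.γ₀ * p.u m / p.τp, m, p.M (p.u m), p.I (p.u m))

def IsPosSteadyState (d : ℝ) (s : ℝ × ℝ × ℝ × ℝ × ℝ) : Prop :=
  0 < s.1 ∧ 0 < s.2.1 ∧ 0 < s.2.2.1 ∧ 0 < s.2.2.2.1 ∧ 0 < s.2.2.2.2 ∧
  p.r₁ * s.2.2.1^2 = p.γ₀ * s.1 ∧
  p.γ₀ * s.1 = p.τp * s.2.1 ∧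
  p.τS * s.2.2.2.2 / (1 + p.C * s.1^p.n)
    = d * s.2.2.1 + p.r₂ * s.1 * s.2.2.1 + p.r₁ * s.2.2.1^2 ∧
  (p.α₁ * s.1 / (1 + p.α₂ * s.1)) * (p.Mhat - s.2.2.2.1) * s.2.2.2.1
    - p.σ * s.2.2.2.1 + p.lamM = 0 ∧
  p.τ₁ * s.1 * s.2.2.2.1 / (1 + p.τ₂ * s.1) = p.τ₃ * s.2.2.2.2

variable {p}

theorem u_pos {m : ℝ} (hm : m ≠ 0) : 0 < p.u m := by
  have := p.r₁_pos; have := p.γ₀_pos; unfold u; positivity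

theorem continuous_u : Continuous p.u := by
  unfold u; fun_prop

theorem one_add_C_mul_u_pow_pos {m : ℝ} (hm : m ≠ 0) : 0 < 1 + p.C * p.u m ^ p.n := by
  have := p.C_pos; have := u_pos (p := p) hm; positivity

theorem activation_pos {u : ℝ} (hu : 0 < u) : 0 < p.activation u := by
  have := p.α₁_pos; have := p.α₂_pos; unfold activation; positivity

theorem activation_le {u : ℝ} (hu : 0 ≤ u) : p.activation u ≤ p.α₁ * u :=
  div_le_self (mul_nonneg p.α₁_pos.le hu) (by nlinarith [p.α₂_pos])

theorem M_pos {u : ℝ} (hu : 0 < u) : 0 < p.M u :=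
  quadPosRoot_pos (activation_pos hu) p.lamM_pos

theorem M_balance {u : ℝ} (hu : 0 < u) :
    p.activation u * (p.Mhat - p.M u) * p.M u - p.σ * p.M u + p.lamM = 0 := by
  have hA := activation_pos (p := p) hu
  have := quadPosRoot_isRoot (b := p.σ - p.activation u * p.Mhat) (c := p.lamM) hA.ne'
    (by nlinarith [p.lamM_pos])
  unfold M
  linear_combination -this

theorem Mhat_lt_Mmax : p.Mhat < p.Mmax :=
  lt_add_of_pos_right _ (div_pos p.lamM_pos p.σ_pos)

theorem Mmax_pos : 0 < p.Mmax :=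
  p.Mhat_pos.trans Mhat_lt_Mmax

theorem M_le {u : ℝ} (hu : 0 < u) : p.M u ≤ p.Mmax := by
  have hbal := M_balance (p := p) hu
  have hAM := mul_pos (activation_pos (p := p) hu) (M_pos (p := p) hu)
  have hMhat := Mhat_lt_Mmax (p := p)
  rcases le_or_gt (p.M u) p.Mhat with h | h
  · linarith
  · have : p.σ * p.M u ≤ p.lamM := by nlinarith
    have : p.M u ≤ p.lamM / p.σ := by rwa [le_div_iff₀' p.σ_pos]
    unfold Mmax
    linarith [p.Mhat_pos]

theorem abs_σ_mul_M_sub_le {u : ℝ} (hu : 0 < u) :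
    |p.σ * p.M u - p.lamM| ≤ p.α₁ * p.Mmax ^ 2 * u := by
  have hM := M_pos (p := p) hu
  have := Mmax_pos (p := p)
  have := p.α₁_pos
  calc |p.σ * p.M u - p.lamM| = p.activation u * |p.Mhat - p.M u| * p.M u := by
        rw [show p.σ * p.M u - p.lamM = p.activation u * (p.Mhat - p.M u) * p.M u by
          linear_combination -(M_balance hu), abs_mul, abs_mul, abs_of_pos (activation_pos hu),
          abs_of_pos hM]
    _ ≤ p.α₁ * u * p.Mmax * p.Mmax := by
        gcongr
        · exact activation_le hu.le
        · exact abs_sub_le_of_nonneg_of_le p.Mhat_pos.le Mhat_lt_Mmax.le hM.le (M_le hu)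
        · exact M_le hu
    _ = p.α₁ * p.Mmax ^ 2 * u := by ring

theorem I_pos {u : ℝ} (hu : 0 < u) : 0 < p.I u := by
  have := p.τ₁_pos; have := p.τ₂_pos; have := p.τ₃_pos; have := M_pos (p := p) hu
  unfold I; positivity

theorem I_le {u : ℝ} (hu : 0 < u) : p.I u ≤ p.τ₁ * p.Mmax / (p.τ₂ * p.τ₃) := by
  have := p.τ₁_pos; have := p.τ₂_pos; have := p.τ₃_pos
  unfold I
  rw [div_le_div_iff₀ (by positivity) (by positivity)]
  nlinarith [mul_le_mul_of_nonneg_left (M_le (p := p) hu)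
    (by positivity : 0 ≤ p.τ₁ * p.τ₂ * p.τ₃ * u),
    mul_pos (mul_pos ‹0 < p.τ₁› ‹0 < p.τ₃›) (Mmax_pos (p := p))]

theorem continuousOn_M : ContinuousOn p.M (Ioi 0) := by
  have hA : ContinuousOn p.activation (Ioi 0) := by
    unfold activation
    exact ContinuousOn.div (by fun_prop) (by fun_prop) fun u (hu : 0 < u) =>
      (by nlinarith [p.α₂_pos] : (0 : ℝ) < 1 + p.α₂ * u).ne'
  exact hA.quadPosRoot (continuousOn_const.sub (hA.mul continuousOn_const)) continuousOn_const
    fun u hu => (activation_pos hu).ne'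

theorem continuousOn_F_sub_P : ContinuousOn (fun m => p.F m - p.P m) (Ioi 0) := by
  have hI : ContinuousOn p.I (Ioi 0) := by
    have := continuousOn_M (p := p)
    unfold I
    refine ContinuousOn.div (by fun_prop) (by fun_prop) fun u (hu : 0 < u) => ?_
    have := p.τ₂_pos; have := p.τ₃_pos
    positivity
  have hF : ContinuousOn p.F (Ioi 0) := by
    have := continuous_u (p := p)
    unfold F
    exact ContinuousOn.div (continuousOn_const.mul
      (hI.comp this.continuousOn fun m (hm : 0 < m) => u_pos hm.ne')) (by fun_prop)
      fun m (hm : 0 < m) => mul_ne_zero hm.ne' (one_add_C_mul_u_pow_pos hm.ne').ne'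
  have hP : Continuous p.P := by unfold P; fun_prop
  exact hF.sub hP.continuousOn

theorem tendsto_M_nhdsGT_zero : Tendsto p.M (𝓝[>] 0) (𝓝 (p.lamM / p.σ)) := by
  have hbound : Tendsto (fun u => p.α₁ * p.Mmax ^ 2 * u) (𝓝[>] 0) (𝓝 0) :=
    ((continuous_const.mul continuous_id).tendsto' 0 0 (by simp)).mono_left nhdsWithin_le_nhds
  have hσM : Tendsto (fun u => p.σ * p.M u) (𝓝[>] 0) (𝓝 p.lamM) := by
    rw [tendsto_iff_norm_sub_tendsto_zero]
    exact squeeze_zero' (Eventually.of_forall fun _ => norm_nonneg _)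
      (eventually_mem_nhdsWithin.mono fun u hu => abs_σ_mul_M_sub_le hu) hbound
  exact (hσM.div_const p.σ).congr fun u => mul_div_cancel_left₀ _ p.σ_pos.ne'

theorem tendsto_u_nhdsGT_zero : Tendsto p.u (𝓝[>] 0) (𝓝[>] 0) :=
  tendsto_nhdsWithin_iff.2
    ⟨(continuous_u.tendsto' 0 0 (by simp [u])).mono_left nhdsWithin_le_nhds,
      eventually_mem_nhdsWithin.mono fun _ hm => u_pos (ne_of_gt hm)⟩

theorem F_div_self {m : ℝ} (hm : m ≠ 0) :
    p.F m / m = p.r₁ / p.γ₀ *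
      (p.τS * p.τ₁ * p.M (p.u m) / (p.τ₃ * (1 + p.τ₂ * p.u m) * (1 + p.C * p.u m ^ p.n))) := by
  have := p.γ₀_pos.ne'
  have := p.τ₃_pos.ne'
  have : 1 + p.τ₂ * p.u m ≠ 0 := by nlinarith [u_pos (p := p) hm, p.τ₂_pos]
  have := (one_add_C_mul_u_pow_pos (p := p) hm).ne'
  unfold F I u at *
  field_simp

theorem tendsto_F_div_self :
    Tendsto (fun m => p.F m / m) (𝓝[>] 0)
      (𝓝 (p.r₁ / p.γ₀ * (p.τS * p.τ₁ * (p.lamM / p.σ) / p.τ₃))) := by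
  have hu := tendsto_u_nhdsGT_zero (p := p)
  have hn : p.n ≠ 0 := by have := p.one_le_n; omega
  have hden : Tendsto (fun v => p.τ₃ * (1 + p.τ₂ * v) * (1 + p.C * v ^ p.n)) (𝓝 0) (𝓝 p.τ₃) :=
    (by fun_prop : Continuous _).tendsto' 0 p.τ₃ (by simp [zero_pow hn])
  refine Tendsto.congr'
    (eventually_mem_nhdsWithin.mono fun m hm => (F_div_self (ne_of_gt hm)).symm) ?_
  exact tendsto_const_nhds.mul ((tendsto_const_nhds.mul (tendsto_M_nhdsGT_zero.comp hu)).div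
    (hden.comp (hu.mono_right nhdsWithin_le_nhds)) p.τ₃_pos.ne')

theorem tendsto_F_sub_P_div_self :
    Tendsto (fun m => (p.F m - p.P m) / m) (𝓝[>] 0)
      (𝓝 (p.r₁ / p.γ₀ * (p.τS * p.τ₁ * (p.lamM / p.σ) / p.τ₃) - p.r₁)) := by
  have hP : Tendsto (fun m => p.r₂ * (p.r₁ / p.γ₀) * m + p.r₁) (𝓝[>] 0) (𝓝 p.r₁) :=
    ((by fun_prop : Continuous _).tendsto' 0 p.r₁ (by simp)).mono_left nhdsWithin_le_nhds
  refine (tendsto_F_div_self.sub hP).congr'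
    (eventually_mem_nhdsWithin.mono fun m (hm : 0 < m) => ?_)
  simp only [P]
  field_simp

theorem exists_P_lt_F (hcond : p.σ * p.γ₀ * p.τ₃ < p.τ₁ * p.τS * p.lamM) :
    ∃ m₀ > 0, p.P m₀ < p.F m₀ := by
  have hslope : 0 < p.r₁ / p.γ₀ * (p.τS * p.τ₁ * (p.lamM / p.σ) / p.τ₃) - p.r₁ := by
    have := p.r₁_pos; have := p.γ₀_pos; have := p.σ_pos; have := p.τ₃_pos
    have hgap : 0 < p.τ₁ * p.τS * p.lamM - p.σ * p.γ₀ * p.τ₃ := sub_pos.2 hcond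
    rw [show p.r₁ / p.γ₀ * (p.τS * p.τ₁ * (p.lamM / p.σ) / p.τ₃) - p.r₁
      = p.r₁ * (p.τ₁ * p.τS * p.lamM - p.σ * p.γ₀ * p.τ₃) / (p.γ₀ * p.σ * p.τ₃) by
        field_simp]
    positivity
  obtain ⟨m₀, hpos, hm₀⟩ :=
    ((tendsto_F_sub_P_div_self.eventually (lt_mem_nhds hslope)).and self_mem_nhdsWithin).exists
  exact ⟨m₀, hm₀, sub_pos.1 ((div_pos_iff_of_pos_right hm₀).1 hpos)⟩

theorem tendsto_F_sub_P_nhdsGT_zero : Tendsto (fun m => p.F m - p.P m) (𝓝[>] 0) (𝓝 0) := by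
  have hm : Tendsto (fun m : ℝ => m) (𝓝[>] 0) (𝓝 0) := tendsto_nhdsWithin_of_tendsto_nhds tendsto_id
  have := hm.mul (tendsto_F_sub_P_div_self (p := p))
  rw [zero_mul] at this
  exact this.congr' (eventually_mem_nhdsWithin.mono fun m hm => mul_div_cancel₀ _ (ne_of_gt hm))

theorem F_le {m : ℝ} (hm : 0 < m) : p.F m ≤ p.τS * p.τ₁ * p.Mmax / (p.τ₂ * p.τ₃ * m) := by
  have hu := u_pos (p := p) hm.ne'
  have hI : 0 ≤ p.τS * p.I (p.u m) := mul_nonneg p.τS_pos.le (I_pos hu).le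
  have hden : m ≤ m * (1 + p.C * p.u m ^ p.n) :=
    le_mul_of_one_le_right hm.le (by nlinarith [pow_pos hu p.n, p.C_pos])
  calc p.F m ≤ p.τS * p.I (p.u m) / m := div_le_div_of_nonneg_left hI hm hden
    _ ≤ p.τS * (p.τ₁ * p.Mmax / (p.τ₂ * p.τ₃)) / m := by
        gcongr
        · exact p.τS_pos.le
        · exact I_le hu
    _ = p.τS * p.τ₁ * p.Mmax / (p.τ₂ * p.τ₃ * m) := by ring

theorem tendsto_F_sub_P_atTop : Tendsto (fun m => p.F m - p.P m) atTop atBot := by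
  have hlin : Tendsto (fun m => p.τS * p.τ₁ * p.Mmax / (p.τ₂ * p.τ₃) + -(p.r₁ * m)) atTop atBot :=
    tendsto_const_nhds.add_atBot (tendsto_neg_atBot_iff.2 (tendsto_id.const_mul_atTop p.r₁_pos))
  refine tendsto_atBot_mono' _ ((eventually_ge_atTop 1).mono fun m (hm : 1 ≤ m) => ?_) hlin
  have hm₀ : 0 < m := one_pos.trans_le hm
  have hF : p.τS * p.τ₁ * p.Mmax / (p.τ₂ * p.τ₃ * m) ≤ p.τS * p.τ₁ * p.Mmax / (p.τ₂ * p.τ₃) := by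
    have := p.τS_pos; have := p.τ₁_pos; have := p.τ₂_pos; have := p.τ₃_pos
    have := Mmax_pos (p := p)
    exact div_le_div_of_nonneg_left (by positivity) (by positivity)
      (le_mul_of_one_le_right (by positivity) hm)
  have hP : p.r₁ * m ≤ p.P m := by
    have := p.r₁_pos; have := p.r₂_pos; have := p.γ₀_pos
    unfold P
    nlinarith [(by positivity : 0 ≤ p.r₂ * (p.r₁ / p.γ₀) * m ^ 2)]
  linarith [F_le (p := p) hm₀]

theorem isPosSteadyState_state {m d : ℝ} (hm : 0 < m) (h : p.P m + d = p.F m) :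
    p.IsPosSteadyState d (p.state m) := by
  have hu := u_pos (p := p) hm.ne'
  have hden := one_add_C_mul_u_pow_pos (p := p) hm.ne'
  have := p.γ₀_pos; have := p.τp_pos; have := p.τ₂_pos; have := p.τ₃_pos
  unfold IsPosSteadyState state
  refine ⟨hu, by positivity, hm, M_pos hu, I_pos hu, by unfold u; field_simp, by field_simp, ?_,
    M_balance hu, by unfold I; field_simp⟩
  have hF : p.τS * p.I (p.u m) / (1 + p.C * p.u m ^ p.n) = m * p.F m := by
    unfold F; field_simp
  rw [hF, ← h]
  unfold P u
  field_simp
  ring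

end ModelParams

end

/-- Theorem 3 (existence part): under σγ₀τ₃ < τ₁τS lamM, for d > 0 small enough
the steady-state system admits at least two strictly positive solutions. -/
theorem stmt_14
    (r₁ r₂ γ₀ σ α₁ α₂ Mhat lamM τ₁ τ₂ τ₃ τS C τp : ℝ) (n : ℕ)
    (hr₁ : 0 < r₁) (hr₂ : 0 < r₂) (hγ₀ : 0 < γ₀) (hσ : 0 < σ) (hα₁ : 0 < α₁)
    (hα₂ : 0 < α₂) (hM : 0 < Mhat) (hlam : 0 < lamM) (hτ₁ : 0 < τ₁)
    (hτ₂ : 0 < τ₂) (hτ₃ : 0 < τ₃) (hτS : 0 < τS) (hC : 0 < C) (hτp : 0 < τp)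
    (hn : 1 ≤ n)
    (hcond : σ * γ₀ * τ₃ < τ₁ * τS * lamM) :
    ∃ dt > (0:ℝ), ∀ d : ℝ, 0 < d → d < dt →
      ∃ s₁ s₂ : ℝ × ℝ × ℝ × ℝ × ℝ, s₁ ≠ s₂ ∧
        ∀ s ∈ ({s₁, s₂} : Set (ℝ × ℝ × ℝ × ℝ × ℝ)),
          0 < s.1 ∧ 0 < s.2.1 ∧ 0 < s.2.2.1 ∧ 0 < s.2.2.2.1 ∧ 0 < s.2.2.2.2 ∧
          r₁ * s.2.2.1^2 = γ₀ * s.1 ∧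
          γ₀ * s.1 = τp * s.2.1 ∧
          τS * s.2.2.2.2 / (1 + C * s.1^n)
            = d * s.2.2.1 + r₂ * s.1 * s.2.2.1 + r₁ * s.2.2.1^2 ∧
          (α₁ * s.1 / (1 + α₂ * s.1)) * (Mhat - s.2.2.2.1) * s.2.2.2.1
            - σ * s.2.2.2.1 + lamM = 0 ∧
          τ₁ * s.1 * s.2.2.2.1 / (1 + τ₂ * s.1) = τ₃ * s.2.2.2.2 := by
  let p : ModelParams := ⟨r₁, r₂, γ₀, σ, α₁, α₂, Mhat, lamM, τ₁, τ₂, τ₃, τS, C, τp, n,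
    hr₁, hr₂, hγ₀, hσ, hα₁, hα₂, hM, hlam, hτ₁, hτ₂, hτ₃, hτS, hC, hτp, hn⟩
  obtain ⟨m₀, hm₀, hPF⟩ := p.exists_P_lt_F hcond
  refine ⟨p.F m₀ - p.P m₀, sub_pos.2 hPF, fun d hd hdm₀ => ?_⟩
  obtain ⟨x, hx, y, hy, hgx, hgy⟩ := p.continuousOn_F_sub_P.exists_two_eq_of_eventually_lt hm₀
    hdm₀ (p.tendsto_F_sub_P_nhdsGT_zero.eventually (gt_mem_nhds hd))
    (p.tendsto_F_sub_P_atTop.eventually_lt_atBot d)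
  refine ⟨p.state x, p.state y, fun h => (hx.2.trans hy).ne (congrArg (·.2.2.1) h), ?_⟩
  rintro s (rfl | rfl)
  · exact p.isPosSteadyState_state hx.1 (by linarith)
  · exact p.isPosSteadyState_state (hm₀.trans hy) (by linarith)
end

section
/- With all parameters positive and n ≥ 1, there exists D > 0 such that for all d > D, the system u' = r₁m² − γ₀u, u_p' = γ₀u − τ_p u_p, m' = τ_S I/(1+Cuⁿ) − dm − r₂um − r₁m², M' = (α₁u/(1+α₂u))(M̂−M)M − σM + λ_M, I' = τ₁uM/(1+τ₂u) − τ₃I has no non-negative equilibrium with m > 0; i.e., every non-negative equilibrium has m = 0, u = 0, u_p = 0, I = 0 and M = λ_M/σ. -/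
/-- Theorem 3 (non-existence part): for d large enough, every non-negative
equilibrium is the disease-free equilibrium. -/
theorem stmt_15
    (r₁ r₂ γ₀ σ α₁ α₂ Mhat lamM τ₁ τ₂ τ₃ τS C τp : ℝ) (n : ℕ)
    (hr₁ : 0 < r₁) (hr₂ : 0 < r₂) (hγ₀ : 0 < γ₀) (hσ : 0 < σ) (hα₁ : 0 < α₁)
    (hα₂ : 0 < α₂) (hM : 0 < Mhat) (hlam : 0 < lamM) (hτ₁ : 0 < τ₁)
    (hτ₂ : 0 < τ₂) (hτ₃ : 0 < τ₃) (hτS : 0 < τS) (hC : 0 < C) (hτp : 0 < τp)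
    (hn : 1 ≤ n) :
    ∃ D > (0:ℝ), ∀ d : ℝ, D < d →
      ∀ u up m M I : ℝ,
        0 ≤ u → 0 ≤ up → 0 ≤ m → 0 ≤ M → 0 ≤ I →
        r₁ * m^2 - γ₀ * u = 0 →
        γ₀ * u - τp * up = 0 →
        τS * I / (1 + C * u^n) - d * m - r₂ * u * m - r₁ * m^2 = 0 →
        (α₁ * u / (1 + α₂ * u)) * (Mhat - M) * M - σ * M + lamM = 0 →
        τ₁ * u * M / (1 + τ₂ * u) - τ₃ * I = 0 →
        m = 0 ∧ u = 0 ∧ up = 0 ∧ I = 0 ∧ M = lamM / σ := by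
  set K : ℝ := Mhat + lamM / σ with hKdef
  have hK : 0 < K := by positivity
  clear_value K
  refine ⟨1 + ((τS * τ₁ * K)^2 * r₁) / (γ₀ * τ₂ * τ₃^2), by positivity, ?_⟩
  intro d hd u up m M I hu hup hm hM0 hI e1 e2 e3 e4 e5
  have hY : (0:ℝ) < γ₀ * τ₂ * τ₃^2 := by positivity
  have hd1 : 1 < d := by
    have : 0 < ((τS * τ₁ * K)^2 * r₁) / (γ₀ * τ₂ * τ₃^2) := by positivity
    linarith
  have hd0 : 0 < d := by linarith
  have h1 : (0:ℝ) < 1 + α₂ * u := by positivity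
  have h2 : (0:ℝ) < 1 + τ₂ * u := by positivity
  have h3 : (0:ℝ) < 1 + C * u^n := by positivity
  -- clear denominators
  have e3' : τS * I = (d * m + r₂ * u * m + r₁ * m^2) * (1 + C * u^n) := by
    have h : τS * I / (1 + C * u^n) = d * m + r₂ * u * m + r₁ * m^2 := by linarith
    rw [div_eq_iff h3.ne'] at h
    linarith only [h]
  have e5' : τ₁ * u * M = τ₃ * I * (1 + τ₂ * u) := by
    have h : τ₁ * u * M / (1 + τ₂ * u) = τ₃ * I := by linarith
    rw [div_eq_iff h2.ne'] at h
    linarith only [h]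
  -- bound on M : M ≤ K
  have hMK : M ≤ K := by
    rcases le_or_gt M Mhat with h | h
    · have : 0 < lamM / σ := by positivity
      linarith
    · have hq : 0 ≤ α₁ * u / (1 + α₂ * u) := by positivity
      have h1' : 0 ≤ (α₁ * u / (1 + α₂ * u)) * M := mul_nonneg hq hM0
      have ht : ((α₁ * u / (1 + α₂ * u)) * M) * (Mhat - M) ≤ 0 :=
        mul_nonpos_of_nonneg_of_nonpos h1' (by linarith)
      have hσM : σ * M ≤ lamM := by linarith only [ht, e4]
      have : M ≤ lamM / σ := by rw [le_div_iff₀ hσ]; linarith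
      linarith
  -- useful product facts
  have f3 : τ₁ * u * M ≤ τ₁ * u * K :=
    mul_le_mul_of_nonneg_left hMK (mul_nonneg hτ₁.le hu)
  have hIle : 0 ≤ τ₃ * I := mul_nonneg hτ₃.le hI
  have f2 : 0 ≤ τ₂ * u * (τ₃ * I) := mul_nonneg (mul_nonneg hτ₂.le hu) hIle
  -- A1 : τ₃ I ≤ τ₁ u K
  have A1 : τ₃ * I ≤ τ₁ * u * K := by linarith only [e5', f2, f3]
  -- A3 : d m ≤ τS I
  have hw : 0 ≤ C * u^n := mul_nonneg hC.le (pow_nonneg hu n)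
  have A3 : d * m ≤ τS * I := by
    have p1 : 0 ≤ r₂ * u * m := mul_nonneg (mul_nonneg hr₂.le hu) hm
    have p2 : 0 ≤ r₁ * m^2 := mul_nonneg hr₁.le (sq_nonneg m)
    have p3 : 0 ≤ d * m * (C * u^n) := mul_nonneg (mul_nonneg hd0.le hm) hw
    have p4 : 0 ≤ r₂ * u * m * (C * u^n) := mul_nonneg p1 hw
    have p5 : 0 ≤ r₁ * m^2 * (C * u^n) := mul_nonneg p2 hw
    linarith only [e3', p1, p2, p3, p4, p5]
  -- first prove m = 0
  have hm0 : m = 0 := by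
    by_contra hmne
    have hm' : 0 < m := lt_of_le_of_ne hm (Ne.symm hmne)
    have hγu : γ₀ * u = r₁ * m^2 := by linarith
    have hu' : 0 < u := by
      rcases lt_or_eq_of_le hu with h | h
      · exact h
      · exfalso
        have : (0:ℝ) < r₁ * m^2 := by positivity
        rw [← hγu, ← h, mul_zero] at this
        exact lt_irrefl 0 this
    -- A2 : τ₂ τ₃ I ≤ τ₁ K
    have A2 : τ₂ * τ₃ * I ≤ τ₁ * K := by
      have h : (τ₂ * τ₃ * I) * u ≤ (τ₁ * K) * u := by linarith only [e5', hIle, f3]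
      exact le_of_mul_le_mul_right h hu'
    -- B1 : γ₀ τ₃ d ≤ τS τ₁ K r₁ m
    have e1' : τS * τ₁ * K * (γ₀ * u) = τS * τ₁ * K * (r₁ * m^2) := by rw [hγu]
    have B1 : γ₀ * τ₃ * d ≤ τS * τ₁ * K * r₁ * m := by
      have g1 := mul_le_mul_of_nonneg_left A3 (mul_nonneg hγ₀.le hτ₃.le)
      have g2 := mul_le_mul_of_nonneg_left A1 (mul_nonneg hγ₀.le hτS.le)
      have h : (γ₀ * τ₃ * d) * m ≤ (τS * τ₁ * K * r₁ * m) * m := by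
        linarith only [g1, g2, e1']
      exact le_of_mul_le_mul_right h hm'
    -- B2 : τ₂ τ₃ d m ≤ τS τ₁ K
    have B2 : τ₂ * τ₃ * (d * m) ≤ τS * τ₁ * K := by
      have g3 := mul_le_mul_of_nonneg_left A3 (mul_nonneg hτ₂.le hτ₃.le)
      have g4 := mul_le_mul_of_nonneg_left A2 hτS.le
      linarith only [g3, g4]
    -- B3 : Y d² ≤ X
    have hlhs : 0 ≤ τ₂ * τ₃ * (d * m) := by positivity
    have hrhs : 0 ≤ τS * τ₁ * K * r₁ * m := by positivity
    have hp := mul_le_mul B1 B2 hlhs hrhs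
    have B3 : (γ₀ * τ₂ * τ₃^2) * d^2 ≤ (τS * τ₁ * K)^2 * r₁ := by
      have h : ((γ₀ * τ₂ * τ₃^2) * d^2) * m ≤ ((τS * τ₁ * K)^2 * r₁) * m := by
        linarith only [hp]
      exact le_of_mul_le_mul_right h hm'
    -- contradiction with d > 1 + X / Y
    have hXY : ((τS * τ₁ * K)^2 * r₁) / (γ₀ * τ₂ * τ₃^2) < d := by linarith
    rw [div_lt_iff₀ hY] at hXY
    have t : 0 < (γ₀ * τ₂ * τ₃^2) * d * (d - 1) :=
      mul_pos (mul_pos hY hd0) (sub_pos.mpr hd1)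
    linarith only [B3, hXY, t]
  subst hm0
  have hγu0 : γ₀ * u = 0 := by linarith only [e1]
  have hu0 : u = 0 := (mul_eq_zero.mp hγu0).resolve_left hγ₀.ne'
  subst hu0
  have hup0 : up = 0 := by
    have h : τp * up = 0 := by linarith
    exact (mul_eq_zero.mp h).resolve_left hτp.ne'
  have hI0 : I = 0 := by
    have h : τ₃ * I = 0 := by
      have h' := e5'
      ring_nf at h'
      linarith only [h']
    exact (mul_eq_zero.mp h).resolve_left hτ₃.ne'
  have hM' : M = lamM / σ := by
    have h : (α₁ * 0 / (1 + α₂ * 0)) * (Mhat - M) * M - σ * M + lamM = 0 := e4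
    simp at h
    field_simp
    linarith
  exact ⟨rfl, rfl, hup0, hI0, hM'⟩
end

section
/- Suppose u, m, M, I : [0, ∞) → ℝ solve the system u' = r₁m² − γ₀u, m' = τ_S I/(1+Cuⁿ) − dm − r₂um − r₁m², M' = (α₁u/(1+α₂u))(M̂−M)M − σM + λ_M, I' = τ₁uM/(1+τ₂u) − τ₃I with non-negative initial data, and suppose M is bounded above by some constant K. Then I is bounded: I(t) ≤ max(I(0), τ₁K/(τ₂τ₃)) for all t ≥ 0. -/
open Set

/-!
The saturating production term obeys `τ₁ u M / (1 + τ₂ u) ≤ τ₁ K / τ₂` as soon as `u ≥ 0`, so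
`I' ≤ τ₁ K / τ₂ - τ₃ I`, and `I` stays below the larger of `I 0` and the equilibrium `τ₁ K / (τ₂ τ₃)`
of the linear comparison equation. Nonnegativity of `u` comes from the same comparison principle
applied to `-u`, since `u' ≥ -γ₀ u`.
-/

theorem le_of_hasDerivAt_le_mul_sub {f f' : ℝ → ℝ} {a B : ℝ}
    (hf : ∀ t, 0 ≤ t → HasDerivAt f (f' t) t) (hf' : ∀ t, 0 ≤ t → f' t ≤ a * (B - f t))
    (h0 : f 0 ≤ B) {t : ℝ} (ht : 0 ≤ t) : f t ≤ B := by
  -- `(f - B) e^{a t}` is antitone on `[0, ∞)`.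
  set g : ℝ → ℝ := fun s => (f s - B) * Real.exp (a * s)
  set g' : ℝ → ℝ := fun s => f' s * Real.exp (a * s) + (f s - B) * (Real.exp (a * s) * a)
  have hg : ∀ s, 0 ≤ s → HasDerivAt g (g' s) s := by
    intro s hs
    have hexp : HasDerivAt (fun s => Real.exp (a * s)) (Real.exp (a * s) * a) s := by
      simpa using ((hasDerivAt_id s).const_mul a).exp
    exact ((hf s hs).sub_const B).mul hexp
  have hg_anti : AntitoneOn g (Ici 0) := by
    refine antitoneOn_of_hasDerivWithinAt_nonpos (f' := g') (convex_Ici 0)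
      (fun s hs => (hg s hs).continuousAt.continuousWithinAt) (fun s hs => ?_) (fun s hs => ?_)
    · rw [interior_Ici] at hs
      exact (hg s hs.le).hasDerivWithinAt
    · rw [interior_Ici] at hs
      have hexp := Real.exp_pos (a * s)
      simp only [g']
      nlinarith [hf' s hs.le]
  have hgt : g t ≤ 0 := by
    calc g t ≤ g 0 := hg_anti (mem_Ici.mpr le_rfl) (mem_Ici.mpr ht) ht
      _ = f 0 - B := by simp [g]
      _ ≤ 0 := sub_nonpos.mpr h0
  have hexp := Real.exp_pos (a * t)
  nlinarith

theorem le_max_div_of_hasDerivAt_le_sub_mul {f f' : ℝ → ℝ} {a c : ℝ} (ha : 0 < a)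
    (hf : ∀ t, 0 ≤ t → HasDerivAt f (f' t) t) (hf' : ∀ t, 0 ≤ t → f' t ≤ c - a * f t)
    {t : ℝ} (ht : 0 ≤ t) : f t ≤ max (f 0) (c / a) := by
  refine le_of_hasDerivAt_le_mul_sub (a := a) hf (fun s hs => ?_) (le_max_left _ _) ht
  have hc : c ≤ a * max (f 0) (c / a) := by
    calc c = a * (c / a) := by field_simp
      _ ≤ a * max (f 0) (c / a) := mul_le_mul_of_nonneg_left (le_max_right _ _) ha.le
  linarith [hf' s hs]

theorem nonneg_of_hasDerivAt_eq_sub_mul {u p : ℝ → ℝ} {γ : ℝ}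
    (hu : ∀ t, 0 ≤ t → HasDerivAt u (p t - γ * u t) t) (hp : ∀ t, 0 ≤ t → 0 ≤ p t)
    (h0 : 0 ≤ u 0) {t : ℝ} (ht : 0 ≤ t) : 0 ≤ u t := by
  have := le_of_hasDerivAt_le_mul_sub (f := -u) (a := γ) (B := 0) (fun s hs => (hu s hs).neg)
    (fun s hs => by simp only [Pi.neg_apply]; linarith [hp s hs]) (by simpa using h0) ht
  simpa using this

theorem mul_mul_div_one_add_mul_le {τ₁ τ₂ u M K : ℝ} (hτ₁ : 0 ≤ τ₁) (hτ₂ : 0 < τ₂)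
    (hu : 0 ≤ u) (hM : M ≤ K) (hK : 0 ≤ K) : τ₁ * u * M / (1 + τ₂ * u) ≤ τ₁ * K / τ₂ := by
  have hden : 0 < 1 + τ₂ * u := by positivity
  rw [div_le_div_iff₀ hden hτ₂]
  have hMK : τ₁ * u * M ≤ τ₁ * u * K := mul_le_mul_of_nonneg_left hM (by positivity)
  nlinarith [mul_nonneg hτ₁ hK]

theorem stmt_19_general
    (r₁ γ₀ τ₁ τ₂ τ₃ : ℝ)
    (hr₁ : 0 < r₁) (hτ₁ : 0 < τ₁) (hτ₂ : 0 < τ₂) (hτ₃ : 0 < τ₃)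
    (u m M I : ℝ → ℝ) (K : ℝ)
    (hu : ∀ t : ℝ, 0 ≤ t → HasDerivAt u (r₁ * (m t)^2 - γ₀ * u t) t)
    (hI : ∀ t : ℝ, 0 ≤ t → HasDerivAt I
      (τ₁ * u t * M t / (1 + τ₂ * u t) - τ₃ * I t) t)
    (h0 : 0 ≤ u 0 ∧ 0 ≤ m 0 ∧ 0 ≤ M 0 ∧ 0 ≤ I 0)
    (hK : ∀ t : ℝ, 0 ≤ t → M t ≤ K) :
    ∀ t : ℝ, 0 ≤ t → I t ≤ max (I 0) (τ₁ * K / (τ₂ * τ₃)) := by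
  obtain ⟨hu0, -, hM0, -⟩ := h0
  have hK0 : 0 ≤ K := hM0.trans (hK 0 le_rfl)
  have hu_nonneg : ∀ t, 0 ≤ t → 0 ≤ u t := fun t ht =>
    nonneg_of_hasDerivAt_eq_sub_mul hu (fun s _ => mul_nonneg hr₁.le (sq_nonneg (m s))) hu0 ht
  intro t ht
  rw [← div_div]
  refine le_max_div_of_hasDerivAt_le_sub_mul hτ₃ hI (fun s hs => ?_) ht
  linarith [mul_mul_div_one_add_mul_le hτ₁.le hτ₂ (hu_nonneg s hs) (hK s hs) hK0]

/-- Boundedness of interleukins: if M is bounded by K, then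
I(t) ≤ max (I(0)) (τ₁K/(τ₂τ₃)) for all t ≥ 0. -/
theorem stmt_19
    (r₁ r₂ γ₀ τS C d α₁ α₂ Mhat σ lamM τ₁ τ₂ τ₃ : ℝ) (n : ℕ)
    (hr₁ : 0 < r₁) (hr₂ : 0 < r₂) (hγ₀ : 0 < γ₀) (hτS : 0 < τS) (hC : 0 < C)
    (hd : 0 < d) (hα₁ : 0 < α₁) (hα₂ : 0 < α₂) (hM : 0 < Mhat) (hσ : 0 < σ)
    (hlam : 0 < lamM) (hτ₁ : 0 < τ₁) (hτ₂ : 0 < τ₂) (hτ₃ : 0 < τ₃) (hn : 1 ≤ n)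
    (u m M I : ℝ → ℝ) (K : ℝ)
    (hu : ∀ t : ℝ, 0 ≤ t → HasDerivAt u (r₁ * (m t)^2 - γ₀ * u t) t)
    (hm : ∀ t : ℝ, 0 ≤ t → HasDerivAt m
      (τS * I t / (1 + C * (u t)^n) - d * m t - r₂ * u t * m t - r₁ * (m t)^2) t)
    (hM' : ∀ t : ℝ, 0 ≤ t → HasDerivAt M
      ((α₁ * u t / (1 + α₂ * u t)) * (Mhat - M t) * M t - σ * M t + lamM) t)
    (hI : ∀ t : ℝ, 0 ≤ t → HasDerivAt I
      (τ₁ * u t * M t / (1 + τ₂ * u t) - τ₃ * I t) t)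
    (h0 : 0 ≤ u 0 ∧ 0 ≤ m 0 ∧ 0 ≤ M 0 ∧ 0 ≤ I 0)
    (hK : ∀ t : ℝ, 0 ≤ t → M t ≤ K) :
    ∀ t : ℝ, 0 ≤ t → I t ≤ max (I 0) (τ₁ * K / (τ₂ * τ₃)) :=
  stmt_19_general r₁ γ₀ τ₁ τ₂ τ₃ hr₁ hτ₁ hτ₂ hτ₃ u m M I K hu hI h0 hK
end
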